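/- Define the Catalan triangle (ballot) numbers C_{n,k} = binom(n+k, k) − binom(n+k, k−1) for integers 0 ≤ k ≤ n. Then for every n ≥ 2 and every 1 ≤ k ≤ n−1, the sequence is log-concave: C_{n,k}² ≥ C_{n,k−1} · C_{n,k+1}. -/
import Mathlib


/-- The Catalan triangle (ballot) numbers `C_{n,k} = binom(n+k,k) - binom(n+k,k-1)`,
with the convention `binom(·,-1) = 0`. -/
def ballot (n k : ℕ) : ℕ :=
  Nat.choose (n + k) k -
    match k with
    | 0 => 0
    | j + 1 => Nat.choose (n + (j + 1)) j

lemma ballot_mul (n k : ℕ) (hk : k ≤ n) :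
    (n + 1) * ballot n k = (n + 1 - k) * Nat.choose (n + k) k := by
  cases k with
  | zero => simp [ballot]
  | succ j =>
    have key : (n + (j + 1)).choose (j + 1) * (j + 1)
        = (n + (j + 1)).choose j * (n + 1) := by
      have h := Nat.choose_succ_right_eq (n + (j + 1)) j
      have : n + (j + 1) - j = n + 1 := by omega
      rw [h, this]
    show (n + 1) * ((n + (j + 1)).choose (j + 1) - (n + (j + 1)).choose j)
        = (n + 1 - (j + 1)) * (n + (j + 1)).choose (j + 1)
    have hj : j + 1 ≤ n := hk
    set A := (n + (j + 1)).choose (j + 1) with hA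
    set B := (n + (j + 1)).choose j with hB
    have hBA : (n + 1) * B = (j + 1) * A := by
      rw [mul_comm (n+1) B, mul_comm (j+1) A, ← key]
    calc (n + 1) * (A - B) = (n + 1) * A - (n + 1) * B := Nat.mul_sub _ _ _
      _ = (n + 1) * A - (j + 1) * A := by rw [hBA]
      _ = (n + 1 - (j + 1)) * A := by rw [Nat.sub_mul]

theorem stmt16 (n k : ℕ) (hn : 2 ≤ n) (hk1 : 1 ≤ k) (hk : k ≤ n - 1) :
    ballot n (k - 1) * ballot n (k + 1) ≤ ballot n k ^ 2 := by
  obtain ⟨j, rfl⟩ : ∃ j, k = j + 1 := ⟨k - 1, by omega⟩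
  obtain ⟨a, ha1, ha⟩ : ∃ a, 1 ≤ a ∧ n = j + 1 + a := ⟨n - j - 1, by omega, by omega⟩
  simp only [Nat.add_sub_cancel]
  -- key binomial recurrences
  have h1 : (n + j + 1) * (n + j).choose j = (n + j + 1).choose (j + 1) * (j + 1) := by
    simpa using Nat.add_one_mul_choose_eq (n + j) j
  have h2 : (n + j + 2) * (n + j + 1).choose (j + 1)
      = (n + j + 2).choose (j + 2) * (j + 2) := by
    simpa [show n + j + 1 + 1 = n + j + 2 by omega] using
      Nat.add_one_mul_choose_eq (n + j + 1) (j + 1)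
  set Bm := (n + j).choose j with hBm
  set B := (n + j + 1).choose (j + 1) with hB
  set Bp := (n + j + 2).choose (j + 2) with hBp
  -- scalar inequality
  have hscal : a * (a + 2) * ((j + 1) * (n + j + 2))
      ≤ (a + 1) ^ 2 * ((n + j + 1) * (j + 2)) := by
    subst ha
    nlinarith [sq_nonneg a, sq_nonneg (j : ℕ)]
  -- scaled inequality on binomials
  have hmain : (a + 2) * Bm * (a * Bp) ≤ ((a + 1) * B) ^ 2 := by
    have hpos : 0 < (n + j + 1) * (j + 2) := by positivity
    apply Nat.le_of_mul_le_mul_right _ hpos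
    calc (a + 2) * Bm * (a * Bp) * ((n + j + 1) * (j + 2))
        = a * (a + 2) * (((n + j + 1) * Bm) * (Bp * (j + 2))) := by ring
      _ = a * (a + 2) * ((B * (j + 1)) * ((n + j + 2) * B)) := by rw [h1, ← h2]
      _ = a * (a + 2) * ((j + 1) * (n + j + 2)) * B ^ 2 := by ring
      _ ≤ (a + 1) ^ 2 * ((n + j + 1) * (j + 2)) * B ^ 2 :=
          Nat.mul_le_mul_right _ hscal
      _ = ((a + 1) * B) ^ 2 * ((n + j + 1) * (j + 2)) := by ring
  -- relate ballots to binomials via ballot_mul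
  have e0 : (n + 1) * ballot n j = (a + 2) * Bm := by
    rw [ballot_mul n j (by omega)]
    congr 1
    omega
  have e1 : (n + 1) * ballot n (j + 1) = (a + 1) * B := by
    rw [ballot_mul n (j + 1) (by omega)]
    have : n + (j + 1) = n + j + 1 := by omega
    rw [this]
    congr 1
    omega
  have e2 : (n + 1) * ballot n (j + 2) = a * Bp := by
    rw [ballot_mul n (j + 2) (by omega)]
    have : n + (j + 2) = n + j + 2 := by omega
    rw [this]
    congr 1
    omega
  have hpos2 : 0 < (n + 1) ^ 2 := by positivity
  apply Nat.le_of_mul_le_mul_left _ hpos2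
  calc (n + 1) ^ 2 * (ballot n j * ballot n (j + 2))
      = ((n + 1) * ballot n j) * ((n + 1) * ballot n (j + 2)) := by ring
    _ = (a + 2) * Bm * (a * Bp) := by rw [e0, e2]
    _ ≤ ((a + 1) * B) ^ 2 := hmain
    _ = (n + 1) ^ 2 * ballot n (j + 1) ^ 2 := by rw [← e1]; ring
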